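/- Let μ > 0, h > 0, ψ₁, ψ₂ ∈ ℝ with δψ = ψ₂ − ψ₁, let ψ(s) = ψ₁ + δψ·s/h be linear on [0, h], and let u₁, u₂ ∈ ℝ. Define the harmonic average of the coefficient μ·exp(ψ) along the segment by μ_H = h / (∫₀^h (μ·exp(ψ(s)))^{-1} ds), and the Slotboom values n₁ = u₁·exp(−ψ₁) and n₂ = u₂·exp(−ψ₂). Then the two-point edge flux of the edge-averaged finite element (EAFE) method coincides with the Scharfetter–Gummel flux: μ_H·(n₂ − n₁)/h = (μ/h)·(Be(δψ)·u₂ − Be(−δψ)·u₁). -/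

import Mathlib

/-!
Write `δ = ψ₂ - ψ₁`. Since `1 / (μ exp ψ)` is `μ⁻¹ exp(-ψ₁)` times `exp(-δ s / h)`, the
substitution `s = h t` reduces the harmonic average to `∫₀¹ exp(-δ t) dt = 1 / Be(-δ)`, so
`μ_H = μ exp(ψ₁) Be(-δ)`. The flux is then `(μ / h) Be(-δ) (exp(-δ) u₂ - u₁)`, and the symmetry
`Be(-x) = exp x · Be x` turns `Be(-δ) exp(-δ)` into `Be δ`.
-/

/-- The inverse Bernoulli function `Be(x) = x / (exp x - 1)`, with `Be 0 = 1`. -/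
noncomputable def Be (x : ℝ) : ℝ := if x = 0 then 1 else x / (Real.exp x - 1)

open Real intervalIntegral

theorem exp_sub_one_ne_zero {x : ℝ} (hx : x ≠ 0) : exp x - 1 ≠ 0 :=
  sub_ne_zero.mpr ((exp_eq_one_iff x).not.mpr hx)

theorem Be_ne_zero (x : ℝ) : Be x ≠ 0 := by
  unfold Be
  split_ifs with hx
  · exact one_ne_zero
  · exact div_ne_zero hx (exp_sub_one_ne_zero hx)

theorem Be_neg (x : ℝ) : Be (-x) = exp x * Be x := by
  rcases eq_or_ne x 0 with rfl | hx
  · simp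
  rw [Be, Be, if_neg (neg_ne_zero.mpr hx), if_neg hx, exp_neg,
    show (exp x)⁻¹ - 1 = -(exp x - 1) / exp x by field_simp; ring]
  have := exp_sub_one_ne_zero hx
  field_simp

theorem integral_exp_neg_mul_zero_one (δ : ℝ) :
    ∫ t in (0 : ℝ)..1, exp (-δ * t) = (Be (-δ))⁻¹ := by
  rcases eq_or_ne δ 0 with rfl | hδ
  · simp [Be]
  · have hδ' : -δ ≠ 0 := neg_ne_zero.mpr hδ
    rw [integral_comp_mul_left (fun t => exp t) hδ', integral_exp, Be, if_neg hδ']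
    simp [div_eq_inv_mul]

theorem integral_exp_neg_mul_div (δ : ℝ) {h : ℝ} (hh : h ≠ 0) :
    ∫ s in (0 : ℝ)..h, exp (-(δ * s / h)) = h / Be (-δ) := by
  have := integral_comp_div (fun t => exp (-δ * t)) (a := 0) (b := h) hh
  rw [zero_div, div_self hh, integral_exp_neg_mul_zero_one, smul_eq_mul, ← div_eq_mul_inv] at this
  simpa [mul_div_assoc] using this

theorem eafe_flux_eq_scharfetter_gummel_general
    (μ h ψ₁ ψ₂ u₁ u₂ : ℝ) (hh : 0 < h) :
    (h / ∫ s in (0 : ℝ)..h, (μ * Real.exp (ψ₁ + (ψ₂ - ψ₁) * s / h))⁻¹)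
        * ((u₂ * Real.exp (-ψ₂)) - (u₁ * Real.exp (-ψ₁))) / h
      = (μ / h) * (Be (ψ₂ - ψ₁) * u₂ - Be (-(ψ₂ - ψ₁)) * u₁) := by
  set δ := ψ₂ - ψ₁
  have h_integrand (s : ℝ) :
      (μ * exp (ψ₁ + δ * s / h))⁻¹ = μ⁻¹ * exp (-ψ₁) * exp (-(δ * s / h)) := by
    rw [mul_inv, ← exp_neg, neg_add, exp_add, mul_assoc]
  have h_exp : exp (-ψ₂) = exp (-ψ₁) * exp (-δ) := by
    rw [← exp_add]; congr 1; ring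
  have h_Be : Be δ = exp (-δ) * Be (-δ) := by simpa using Be_neg (-δ)
  simp only [h_integrand, integral_const_mul, integral_exp_neg_mul_div δ hh.ne', h_exp, h_Be]
  have := Be_ne_zero (-δ)
  field_simp

/-- The EAFE two-point edge flux (harmonic average of `μ·exp ψ` along the edge,
applied to the Slotboom values `nᵢ = uᵢ·exp(−ψᵢ)`) coincides with the
Scharfetter–Gummel flux. -/
theorem eafe_flux_eq_scharfetter_gummel
    (μ h ψ₁ ψ₂ u₁ u₂ : ℝ) (hμ : 0 < μ) (hh : 0 < h) :
    (h / ∫ s in (0 : ℝ)..h, (μ * Real.exp (ψ₁ + (ψ₂ - ψ₁) * s / h))⁻¹)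
        * ((u₂ * Real.exp (-ψ₂)) - (u₁ * Real.exp (-ψ₁))) / h
      = (μ / h) * (Be (ψ₂ - ψ₁) * u₂ - Be (-(ψ₂ - ψ₁)) * u₁) :=
  eafe_flux_eq_scharfetter_gummel_general μ h ψ₁ ψ₂ u₁ u₂ hh
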